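/- For every 3CNF formula φ with k clauses over Boolean variables X₁,…,X_m, there exists a function f : {0,1}^m → ℝ of the form f(x) = -∑_{j=1}^k s(l_{j,1}(x) + l_{j,2}(x) + l_{j,3}(x)), where each l_{j,r}(x) is either x_i or 1 - x_i for some variable index i, such that φ is satisfiable if and only if there exists x ∈ {0,1}^m with f(x) ≤ -k. -/
import Mathlib


noncomputable def ReLU (x : ℝ) : ℝ := max x 0

noncomputable def s (x : ℝ) : ℝ := ReLU x - ReLU (x - 1)

/-- Encoding of a literal (variable index, polarity): `X_i ↦ x_i`, `¬X_i ↦ 1 - x_i`. -/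
noncomputable def litEnc {m : ℕ} (L : Fin m × Bool) (x : Fin m → ℝ) : ℝ :=
  if L.2 then x L.1 else 1 - x L.1

/-- A 3CNF formula with `k` clauses over `m` variables is satisfiable. -/
def Sat3 {m k : ℕ} (C : Fin k → Fin 3 → Fin m × Bool) : Prop :=
  ∃ σ : Fin m → Bool, ∀ j : Fin k, ∃ r : Fin 3,
    (if (C j r).2 then σ (C j r).1 else ¬ σ (C j r).1)

lemma s_le_one (x : ℝ) : s x ≤ 1 := by
  unfold s ReLU
  rcases le_or_gt x 1 with h | h
  · have : max (x - 1) 0 = 0 := max_eq_right (by linarith)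
    rw [this]; simp [max_le_iff]; exact h
  · have h1 : max x 0 = x := max_eq_left (by linarith)
    have h2 : max (x - 1) 0 = x - 1 := max_eq_left (by linarith)
    rw [h1, h2]; linarith

lemma s_one_of (x : ℝ) (h : 1 ≤ x) : s x = 1 := by
  unfold s ReLU
  rw [max_eq_left (by linarith), max_eq_left (by linarith)]; ring

lemma litEnc_bool {m : ℕ} (L : Fin m × Bool) (x : Fin m → ℝ)
    (hx : ∀ i, x i = 0 ∨ x i = 1) : litEnc L x = 0 ∨ litEnc L x = 1 := by
  unfold litEnc
  rcases hx L.1 with h | h <;> cases L.2 <;> simp [h]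

theorem stmt_5 (m k : ℕ) (C : Fin k → Fin 3 → Fin m × Bool) :
    ∃ l : Fin k → Fin 3 → (Fin m → ℝ) → ℝ,
      (∀ j r, l j r = litEnc (C j r)) ∧
      (∀ j r, ∃ i : Fin m, l j r = (fun x => x i) ∨ l j r = (fun x => 1 - x i)) ∧
      (Sat3 C ↔ ∃ x : Fin m → ℝ, (∀ i, x i = 0 ∨ x i = 1) ∧
        -(∑ j : Fin k, s (l j 0 x + l j 1 x + l j 2 x)) ≤ -(k : ℝ)) := by
  refine ⟨fun j r => litEnc (C j r), fun _ _ => rfl, ?_, ?_⟩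
  · intro j r
    refine ⟨(C j r).1, ?_⟩
    cases h : (C j r).2
    · right; funext x; simp [litEnc, h]
    · left; funext x; simp [litEnc, h]
  constructor
  · rintro ⟨σ, hσ⟩
    refine ⟨fun i => if σ i then 1 else 0, fun i => by by_cases h : σ i <;> simp [h], ?_⟩
    have key : ∀ j : Fin k,
        s (litEnc (C j 0) (fun i => if σ i then 1 else 0)
          + litEnc (C j 1) (fun i => if σ i then 1 else 0)
          + litEnc (C j 2) (fun i => if σ i then 1 else 0)) = 1 := by
      intro j
      obtain ⟨r, hr⟩ := hσ j
      set x : Fin m → ℝ := fun i => if σ i then 1 else 0 with hxdef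
      have hx : ∀ i, x i = 0 ∨ x i = 1 := fun i => by by_cases h : σ i <;> simp [hxdef, h]
      have hr1 : litEnc (C j r) x = 1 := by
        unfold litEnc
        cases hb : (C j r).2 <;> rw [hb] at hr <;> simp at hr <;> simp [hxdef, hr]
      have h0 : (0:ℝ) ≤ litEnc (C j 0) x := by rcases litEnc_bool (C j 0) x hx with h|h <;> rw [h] <;> norm_num
      have h1 : (0:ℝ) ≤ litEnc (C j 1) x := by rcases litEnc_bool (C j 1) x hx with h|h <;> rw [h] <;> norm_num
      have h2 : (0:ℝ) ≤ litEnc (C j 2) x := by rcases litEnc_bool (C j 2) x hx with h|h <;> rw [h] <;> norm_num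
      apply s_one_of
      fin_cases r <;> simp at hr1 <;> linarith [hr1]
    calc -(∑ j : Fin k, s (litEnc (C j 0) _ + litEnc (C j 1) _ + litEnc (C j 2) _))
        = -(∑ j : Fin k, (1:ℝ)) := by rw [Finset.sum_congr rfl (fun j _ => key j)]
      _ ≤ -(k:ℝ) := by simp
  · rintro ⟨x, hx, hle⟩
    have hsum : (k:ℝ) ≤ ∑ j : Fin k, s (litEnc (C j 0) x + litEnc (C j 1) x + litEnc (C j 2) x) := by
      linarith
    have heach : ∀ j : Fin k, s (litEnc (C j 0) x + litEnc (C j 1) x + litEnc (C j 2) x) = 1 := by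
      by_contra h
      push_neg at h
      obtain ⟨j, hj⟩ := h
      have hlt : s (litEnc (C j 0) x + litEnc (C j 1) x + litEnc (C j 2) x) < 1 :=
        lt_of_le_of_ne (s_le_one _) hj
      have : ∑ j : Fin k, s (litEnc (C j 0) x + litEnc (C j 1) x + litEnc (C j 2) x)
          < ∑ j' : Fin k, (1:ℝ) :=
        Finset.sum_lt_sum (fun i _ => s_le_one _) ⟨j, Finset.mem_univ j, hlt⟩
      simp at this
      linarith
    refine ⟨fun i => x i = 1, fun j => ?_⟩
    have hj := heach j
    have hlit : ∃ r : Fin 3, litEnc (C j r) x = 1 := by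
      by_contra h
      push_neg at h
      have h0 : litEnc (C j 0) x = 0 := (litEnc_bool _ x hx).resolve_right (h 0)
      have h1 : litEnc (C j 1) x = 0 := (litEnc_bool _ x hx).resolve_right (h 1)
      have h2 : litEnc (C j 2) x = 0 := (litEnc_bool _ x hx).resolve_right (h 2)
      rw [h0, h1, h2] at hj
      norm_num [s, ReLU] at hj
    obtain ⟨r, hr⟩ := hlit
    refine ⟨r, ?_⟩
    unfold litEnc at hr
    cases hb : (C j r).2 <;> rw [hb] at hr <;> simp
    · intro habs
      rw [habs] at hr; norm_num at hr
    · exact hr
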